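/- arXiv:1209.2926 — 2 statements merged into one kernel-verified Lean document; each statement's English description precedes it below -/
import Mathlib

section
/- For any 3×3 real matrix A and any x ∈ ℝ³, hat(x) A + Aᵀ hat(x) = hat((tr(A) I − A) x). -/
open Matrix

/-- The hat map sending `x ∈ ℝ³` to the skew-symmetric matrix with `hat x * v = x ×₃ v`. -/
def hat (x : Fin 3 → ℝ) : Matrix (Fin 3) (Fin 3) ℝ :=
  !![0, -x 2, x 1; x 2, 0, -x 0; -x 1, x 0, 0]

theorem hat_A_add_At_hat (A : Matrix (Fin 3) (Fin 3) ℝ) (x : Fin 3 → ℝ) :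
    hat x * A + Aᵀ * hat x = hat ((A.trace • (1 : Matrix (Fin 3) (Fin 3) ℝ) - A).mulVec x) := by
  ext i j
  fin_cases i <;> fin_cases j <;>
    simp [hat, mul_apply, mulVec, vecMul, trace, Fin.sum_univ_three, one_apply, dotProduct] <;>
    ring
end

section
/- Let b ∈ S², let R, R_d be smooth curves in SO(3) with Ṙ = R hat(Ω) and Ṙ_d = hat(ω_d) R_d, and let r_d(t) = R_d(t) b, e_Ω = Ω − Rᵀω_d, Ψ(t) = 1 − (R(t)b) · r_d(t), e_r(t) = (R(t)ᵀ r_d(t)) × b. Then dΨ/dt = e_r · e_Ω. -/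
open Matrix

attribute [local instance] Matrix.normedAddCommGroup Matrix.normedSpace

/-- Euclidean norm on `ℝ³`. -/
noncomputable def enorm (v : Fin 3 → ℝ) : ℝ := Real.sqrt (v ⬝ᵥ v)

/-!
Write `u = Rᵀ r_d` and `w = Rᵀ ω_d`, so that `r_d = R u` and `ω_d = R w`. By the product rule
`Ψ' = -(R (Ω × b)) · r_d - (R b) · (ω_d × r_d)`. The first term is `-(Ω × b) · u`; since a
matrix of determinant one preserves the scalar triple product, the second is `-b · (w × u)`.
Both are triple products, and cyclic permutation turns their sum into `(u × b) · (Ω - w)`.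
-/

lemma hat_mulVec (x v : Fin 3 → ℝ) : hat x *ᵥ v = x ⨯₃ v := by
  ext i
  fin_cases i <;> simp [hat, cross_apply, mulVec, dotProduct, Fin.sum_univ_three] <;> ring

lemma dotProduct_mulVec_cross_mulVec {R : Type*} [CommRing R] (A : Matrix (Fin 3) (Fin 3) R)
    (x y z : Fin 3 → R) : A *ᵥ x ⬝ᵥ (A *ᵥ y) ⨯₃ (A *ᵥ z) = A.det * (x ⬝ᵥ y ⨯₃ z) := by
  have h : of ![A *ᵥ x, A *ᵥ y, A *ᵥ z] = of ![x, y, z] * Aᵀ := by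
    ext i j
    fin_cases i <;> simp [mulVec, mul_apply, dotProduct, mul_comm]
  calc A *ᵥ x ⬝ᵥ (A *ᵥ y) ⨯₃ (A *ᵥ z) = det (of ![A *ᵥ x, A *ᵥ y, A *ᵥ z]) :=
        triple_product_eq_det _ _ _
    _ = A.det * det (of ![x, y, z]) := by rw [h, det_mul, det_transpose, mul_comm]
    _ = A.det * (x ⬝ᵥ y ⨯₃ z) := by rw [triple_product_eq_det]; rfl

lemma isBilinearMap_mulVec_dotProduct_mulVec {m n : Type*} [Fintype m] [Fintype n]
    (v w : n → ℝ) : IsBilinearMap ℝ fun M N : Matrix m n ℝ => M *ᵥ v ⬝ᵥ N *ᵥ w where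
  add_left _ _ _ := by rw [add_mulVec, add_dotProduct]
  smul_left _ _ _ := by rw [smul_mulVec, smul_dotProduct]
  add_right _ _ _ := by rw [add_mulVec, dotProduct_add]
  smul_right _ _ _ := by rw [smul_mulVec, dotProduct_smul]

lemma HasDerivAt.mulVec_dotProduct_mulVec {m n : Type*} [Fintype m] [Fintype n]
    {A B : ℝ → Matrix m n ℝ} {A' B' : Matrix m n ℝ} {t : ℝ} (v w : n → ℝ)
    (hA : HasDerivAt A A' t) (hB : HasDerivAt B B' t) :
    HasDerivAt (fun s => A s *ᵥ v ⬝ᵥ B s *ᵥ w) (A t *ᵥ v ⬝ᵥ B' *ᵥ w + A' *ᵥ v ⬝ᵥ B t *ᵥ w) t :=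
  (isBilinearMap_mulVec_dotProduct_mulVec v w).toContinuousBilinearMap.hasDerivAt_of_bilinear
    (fun _ => hA) (fun _ => hB)

theorem deriv_Psi_eq_er_dot_eOmega_general
    (b : Fin 3 → ℝ)
    (R Rd : ℝ → Matrix (Fin 3) (Fin 3) ℝ) (Ω ωd : ℝ → Fin 3 → ℝ)
    (hSO : ∀ t, (R t)ᵀ * R t = 1 ∧ (R t).det = 1)
    (hR : ∀ t, HasDerivAt R (R t * hat (Ω t)) t)
    (hRd : ∀ t, HasDerivAt Rd (hat (ωd t) * Rd t) t)
    (t : ℝ) :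
    HasDerivAt (fun s => 1 - ((R s).mulVec b) ⬝ᵥ ((Rd s).mulVec b))
      ((((R t)ᵀ.mulVec ((Rd t).mulVec b)) ⨯₃ b) ⬝ᵥ (Ω t - (R t)ᵀ.mulVec (ωd t))) t := by
  obtain ⟨hO, hdet⟩ := hSO t
  have hRRt : R t * (R t)ᵀ = 1 := mul_eq_one_comm.mp hO
  refine ((hR t).mulVec_dotProduct_mulVec b b (hRd t)).const_sub 1 |>.congr_deriv ?_
  set u := (R t)ᵀ *ᵥ (Rd t *ᵥ b)
  set w := (R t)ᵀ *ᵥ ωd t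
  have hu : Rd t *ᵥ b = R t *ᵥ u := by rw [mulVec_mulVec, hRRt, one_mulVec]
  have hw : ωd t = R t *ᵥ w := by rw [mulVec_mulVec, hRRt, one_mulVec]
  have hΩ : (R t * hat (Ω t)) *ᵥ b ⬝ᵥ Rd t *ᵥ b = Ω t ⨯₃ b ⬝ᵥ u := by
    rw [← mulVec_mulVec, hat_mulVec, dotProduct_comm, ← dotProduct_transpose_mulVec]
  have hωd : R t *ᵥ b ⬝ᵥ (hat (ωd t) * Rd t) *ᵥ b = b ⬝ᵥ w ⨯₃ u := by
    rw [← mulVec_mulVec, hat_mulVec, hu, hw, dotProduct_mulVec_cross_mulVec, hdet, one_mul]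
  rw [hΩ, hωd, triple_product_permutation b, dotProduct_comm _ u, triple_product_permutation u,
    ← cross_anticomm u b, dotProduct_neg, dotProduct_comm w, dotProduct_comm (Ω t), dotProduct_sub]
  ring

theorem deriv_Psi_eq_er_dot_eOmega
    (b : Fin 3 → ℝ) (hb : _root_.enorm b = 1)
    (R Rd : ℝ → Matrix (Fin 3) (Fin 3) ℝ) (Ω ωd : ℝ → Fin 3 → ℝ)
    (hSO : ∀ t, (R t)ᵀ * R t = 1 ∧ (R t).det = 1)
    (hSOd : ∀ t, (Rd t)ᵀ * Rd t = 1 ∧ (Rd t).det = 1)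
    (hR : ∀ t, HasDerivAt R (R t * hat (Ω t)) t)
    (hRd : ∀ t, HasDerivAt Rd (hat (ωd t) * Rd t) t)
    (t : ℝ) :
    HasDerivAt (fun s => 1 - ((R s).mulVec b) ⬝ᵥ ((Rd s).mulVec b))
      ((((R t)ᵀ.mulVec ((Rd t).mulVec b)) ⨯₃ b) ⬝ᵥ (Ω t - (R t)ᵀ.mulVec (ωd t))) t :=
  deriv_Psi_eq_er_dot_eOmega_general b R Rd Ω ωd hSO hR hRd t
end
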